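/- arXiv:1609.00318 — 4 statements merged into one kernel-verified Lean document; each statement's English description precedes it below -/
import Mathlib

section
/- Let $B \in \mathbb{R}^{n\times n}$ be symmetric positive definite, $G \in \mathbb{R}^{n\times n}$ symmetric, and $D \in \mathbb{R}^{n\times q}$ such that $D^T G D$ is positive definite. Then the matrix $B^+ = B - BD(D^TBD)^{-1}D^TB + GD(D^TGD)^{-1}D^TG$ is symmetric positive definite. -/
/-!
Let `P = D (DᵀBD)⁻¹ DᵀB` be the `B`-orthogonal projection onto the column space of `D`. Then
`B⁺ = (1 - P)ᵀ B (1 - P) + (DᵀG)ᵀ (DᵀGD)⁻¹ (DᵀG)`, a sum of two positive semidefinite matrices.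
If `B⁺ x = 0`, both summands kill `x`: the first forces `x = P x = D w`, the second `DᵀG x = 0`,
i.e. `(DᵀGD) w = 0`, so `w = 0` and `x = 0`.
-/

open Matrix

namespace Matrix

variable {n m : Type*} [Fintype n] [Fintype m]

section PosDef

open scoped ComplexOrder

variable {𝕜 : Type*} [RCLike 𝕜]

theorem PosSemidef.add_mulVec_eq_zero_iff {P Q : Matrix n n 𝕜} (hP : P.PosSemidef)
    (hQ : Q.PosSemidef) {x : n → 𝕜} :
    (P + Q) *ᵥ x = 0 ↔ P *ᵥ x = 0 ∧ Q *ᵥ x = 0 := by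
  refine ⟨fun h => ?_, fun ⟨hPx, hQx⟩ => by rw [add_mulVec, hPx, hQx, add_zero]⟩
  rw [← hP.dotProduct_mulVec_zero_iff, ← hQ.dotProduct_mulVec_zero_iff]
  have hsum : star x ⬝ᵥ P *ᵥ x + star x ⬝ᵥ Q *ᵥ x = 0 := by
    rw [← dotProduct_add, ← add_mulVec, h, dotProduct_zero]
  exact (add_eq_zero_iff_of_nonneg (hP.dotProduct_mulVec_nonneg x)
    (hQ.dotProduct_mulVec_nonneg x)).mp hsum

theorem PosSemidef.posDef_of_mulVec_eq_zero [DecidableEq n] {A : Matrix n n 𝕜}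
    (hA : A.PosSemidef) (h : ∀ x, A *ᵥ x = 0 → x = 0) : A.PosDef :=
  hA.posDef_iff_isUnit.mpr <| mulVec_injective_iff_isUnit.mp <|
    (injective_iff_map_eq_zero A.mulVecLin).mpr h

theorem PosDef.conjTranspose_mul_mul_mulVec_eq_zero_iff {A : Matrix m m 𝕜} (hA : A.PosDef)
    (C : Matrix m n 𝕜) {x : n → 𝕜} : (Cᴴ * A * C) *ᵥ x = 0 ↔ C *ᵥ x = 0 := by
  rw [← (hA.posSemidef.conjTranspose_mul_mul_same C).dotProduct_mulVec_zero_iff,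
    ← mulVec_mulVec, ← mulVec_mulVec, dotProduct_mulVec, ← star_mulVec]
  exact ⟨fun h => by_contra fun hCx => (hA.dotProduct_mulVec_pos hCx).ne' h,
    fun h => by rw [h, mulVec_zero, dotProduct_zero]⟩

end PosDef

section OrthProj

variable {R : Type*} [CommRing R] [DecidableEq m]

noncomputable def orthProj (B : Matrix n n R) (D : Matrix n m R) : Matrix n n R :=
  D * (Dᵀ * B * D)⁻¹ * Dᵀ * B

variable {B : Matrix n n R} {D : Matrix n m R}

theorem isIdempotentElem_orthProj (hK : IsUnit (Dᵀ * B * D).det) :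
    IsIdempotentElem (orthProj B D) := by
  have hKK : (Dᵀ * B * D)⁻¹ * (Dᵀ * B * D) = 1 := nonsing_inv_mul _ hK
  calc orthProj B D * orthProj B D
      = D * ((Dᵀ * B * D)⁻¹ * (Dᵀ * B * D)) * (Dᵀ * B * D)⁻¹ * Dᵀ * B := by
        simp only [orthProj, Matrix.mul_assoc]
    _ = orthProj B D := by rw [hKK, Matrix.mul_one, orthProj]

theorem transpose_orthProj_mul (hB : B.IsSymm) : (orthProj B D)ᵀ * B = B * orthProj B D := by
  simp only [orthProj, transpose_mul, transpose_transpose, transpose_nonsing_inv, hB.eq,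
    Matrix.mul_assoc]

theorem transpose_one_sub_orthProj_mul_mul [DecidableEq n] (hB : B.IsSymm)
    (hK : IsUnit (Dᵀ * B * D).det) :
    (1 - orthProj B D)ᵀ * B * (1 - orthProj B D) = B - B * D * (Dᵀ * B * D)⁻¹ * Dᵀ * B := by
  calc (1 - orthProj B D)ᵀ * B * (1 - orthProj B D)
      = B * ((1 - orthProj B D) * (1 - orthProj B D)) := by
        rw [transpose_sub, transpose_one, Matrix.sub_mul, transpose_orthProj_mul hB,
          Matrix.one_mul]
        simp only [Matrix.mul_sub, Matrix.sub_mul, Matrix.mul_one, Matrix.one_mul,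
          Matrix.mul_assoc]
    _ = B - B * D * (Dᵀ * B * D)⁻¹ * Dᵀ * B := by
        rw [(isIdempotentElem_orthProj hK).one_sub.eq, Matrix.mul_sub, Matrix.mul_one, orthProj]
        simp only [Matrix.mul_assoc]

theorem exists_mulVec_eq_of_one_sub_orthProj_mulVec_eq_zero [DecidableEq n] {x : n → R}
    (hx : (1 - orthProj B D) *ᵥ x = 0) : ∃ w, D *ᵥ w = x := by
  refine ⟨((Dᵀ * B * D)⁻¹ * Dᵀ * B) *ᵥ x, ?_⟩
  rw [sub_mulVec, one_mulVec, sub_eq_zero, eq_comm] at hx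
  simpa only [orthProj, mulVec_mulVec, Matrix.mul_assoc] using hx

end OrthProj

end Matrix

theorem stmt_0 {n q : ℕ} (B G : Matrix (Fin n) (Fin n) ℝ)
    (D : Matrix (Fin n) (Fin q) ℝ)
    (hB : B.PosDef) (hG : G.IsSymm)
    (hDGD : (Dᵀ * G * D).PosDef) :
    (B - B * D * (Dᵀ * B * D)⁻¹ * Dᵀ * B + G * D * (Dᵀ * G * D)⁻¹ * Dᵀ * G).PosDef := by
  have hM_inj : Function.Injective (Dᵀ * G * D).mulVec :=
    mulVec_injective_iff_isUnit.mpr hDGD.isUnit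
  have hD_inj : Function.Injective D.mulVec := by
    refine .of_comp (f := (Dᵀ * G).mulVec) ?_
    simpa only [Function.comp_def, mulVec_mulVec] using hM_inj
  have hK : IsUnit (Dᵀ * B * D).det :=
    (isUnit_iff_isUnit_det _).mp (hB.conjTranspose_mul_mul_same hD_inj).isUnit
  have hP := hB.posSemidef.conjTranspose_mul_mul_same (1 - orthProj B D)
  have hQ := hDGD.inv.posSemidef.conjTranspose_mul_mul_same (Dᵀ * G)
  have hdecomp : B - B * D * (Dᵀ * B * D)⁻¹ * Dᵀ * B + G * D * (Dᵀ * G * D)⁻¹ * Dᵀ * G =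
      (1 - orthProj B D)ᴴ * B * (1 - orthProj B D) + (Dᵀ * G)ᴴ * (Dᵀ * G * D)⁻¹ * (Dᵀ * G) := by
    rw [conjTranspose_eq_transpose_of_trivial, conjTranspose_eq_transpose_of_trivial,
      transpose_one_sub_orthProj_mul_mul (isHermitian_iff_isSymm.mp hB.isHermitian) hK]
    simp only [transpose_mul, transpose_transpose, hG.eq, Matrix.mul_assoc]
  rw [hdecomp]
  refine (hP.add hQ).posDef_of_mulVec_eq_zero fun x hx => ?_
  obtain ⟨hPx, hQx⟩ := (hP.add_mulVec_eq_zero_iff hQ).mp hx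
  obtain ⟨w, rfl⟩ := exists_mulVec_eq_of_one_sub_orthProj_mulVec_eq_zero
    ((hB.conjTranspose_mul_mul_mulVec_eq_zero_iff _).mp hPx)
  have hMw : (Dᵀ * G * D) *ᵥ w = 0 := by
    simpa only [mulVec_mulVec] using (hDGD.inv.conjTranspose_mul_mul_mulVec_eq_zero_iff _).mp hQx
  rw [hM_inj (hMw.trans (mulVec_zero _).symm), mulVec_zero]
end

section
/- Let $B \in \mathbb{R}^{n\times n}$ be symmetric positive definite, $G \in \mathbb{R}^{n\times n}$ symmetric, and $D \in \mathbb{R}^{n\times q}$ with $D^TGD$ positive definite. Define $B^+ = B - BD(D^TBD)^{-1}D^TB + GD(D^TGD)^{-1}D^TG$. Then $\det(B^+) = \det(B) \cdot \det(D^TGD)/\det(D^TBD)$. -/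
/-!
Write the update as a low-rank perturbation `B + U * V` with `U = [B D | G D]` (of width `2q`) and
`V = [-(DᵀBD)⁻¹ Dᵀ B ; (DᵀGD)⁻¹ Dᵀ G]`. The generalized matrix determinant lemma
(Sylvester's identity combined with Sherman–Morrison–Woodbury) gives
`det (B + U V) = det B * det (1 + V B⁻¹ U)`, and `1 + V B⁻¹ U` is the `2 × 2` block matrix
`[0, -(DᵀBD)⁻¹ DᵀGD ; 1, *]`, whose determinant is `det ((DᵀBD)⁻¹ DᵀGD)`.
-/

open Matrix

namespace Matrix

variable {m p R : Type*} [Fintype m] [Fintype p]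

theorem det_fromBlocks_zero_one [DecidableEq p] [CommRing R] (X Z : Matrix p p R) :
    (fromBlocks 0 X 1 Z).det = (-X).det := by
  have h : fromBlocks (1 : Matrix p p R) 1 0 1 * fromBlocks 0 X 1 Z
      = fromBlocks 1 (X + Z) 1 Z := by
    simp [fromBlocks_multiply]
  have hdet := congrArg det h
  rw [det_mul, det_fromBlocks_zero₂₁, det_one, one_mul, one_mul, det_fromBlocks_one₁₁] at hdet
  rw [hdet, Matrix.one_mul, sub_add_cancel_right]

theorem PosDef.mulVec_injective_of_conjTranspose_mul_mul [CommRing R] [PartialOrder R]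
    [StarRing R] {G : Matrix m m R} {D : Matrix m p R} (h : (Dᴴ * G * D).PosDef) :
    Function.Injective D.mulVec := by
  rw [← coe_mulVecLin, injective_iff_map_eq_zero]
  intro x hDx
  rw [mulVecLin_apply] at hDx
  by_contra hx
  have hpos := h.dotProduct_mulVec_pos hx
  rw [← mulVec_mulVec, ← mulVec_mulVec, hDx, mulVec_zero, mulVec_zero, dotProduct_zero] at hpos
  exact lt_irrefl 0 hpos

noncomputable def blockBFGSUpdate [DecidableEq p] [CommRing R] (B G : Matrix m m R)
    (D : Matrix m p R) : Matrix m m R :=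
  B - B * D * (Dᵀ * B * D)⁻¹ * Dᵀ * B + G * D * (Dᵀ * G * D)⁻¹ * Dᵀ * G

theorem det_blockBFGSUpdate [DecidableEq m] [DecidableEq p] [CommRing R] (B G : Matrix m m R)
    (D : Matrix m p R) (hB : IsUnit B.det) (hA : IsUnit (Dᵀ * B * D).det)
    (hE : IsUnit (Dᵀ * G * D).det) :
    (blockBFGSUpdate B G D).det = B.det * ((Dᵀ * B * D)⁻¹ * (Dᵀ * G * D)).det := by
  set A := Dᵀ * B * D
  set E := Dᵀ * G * D
  set U := fromCols (B * D) (G * D)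
  set V := fromRows (-(A⁻¹ * Dᵀ * B)) (E⁻¹ * Dᵀ * G)
  have hUV : blockBFGSUpdate B G D = B + U * V := by
    simp only [blockBFGSUpdate, U, V, A, E, fromCols_mul_fromRows, Matrix.mul_neg, Matrix.mul_assoc]
    abel
  have hA' : A⁻¹ * Dᵀ * B * D = 1 := by
    rw [Matrix.mul_assoc, Matrix.mul_assoc, ← Matrix.mul_assoc Dᵀ]
    exact nonsing_inv_mul _ hA
  have hE' : E⁻¹ * Dᵀ * G * D = 1 := by
    rw [Matrix.mul_assoc, Matrix.mul_assoc, ← Matrix.mul_assoc Dᵀ]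
    exact nonsing_inv_mul _ hE
  have hVU : 1 + V * B⁻¹ * U
      = fromBlocks 0 (-(A⁻¹ * E)) 1 (1 + E⁻¹ * Dᵀ * G * B⁻¹ * G * D) := by
    rw [← fromBlocks_one, fromRows_mul, fromRows_mul_fromCols, fromBlocks_add]
    congr 1
    · rw [Matrix.mul_assoc _ B⁻¹, nonsing_inv_mul_cancel_left _ _ hB, Matrix.neg_mul, hA',
        add_neg_cancel]
    · rw [Matrix.neg_mul, mul_nonsing_inv_cancel_right _ _ hB, zero_add]
      simp only [E, Matrix.neg_mul, Matrix.mul_assoc]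
    · rw [Matrix.mul_assoc _ B⁻¹, nonsing_inv_mul_cancel_left _ _ hB, hE', zero_add]
    · simp only [Matrix.mul_assoc]
  rw [hUV, det_add_mul U V hB, hVU, det_fromBlocks_zero_one, neg_neg]

end Matrix

theorem stmt_1_general {n q : ℕ} (B G : Matrix (Fin n) (Fin n) ℝ)
    (D : Matrix (Fin n) (Fin q) ℝ)
    (hB : B.PosDef)
    (hDGD : (Dᵀ * G * D).PosDef) :
    (B - B * D * (Dᵀ * B * D)⁻¹ * Dᵀ * B + G * D * (Dᵀ * G * D)⁻¹ * Dᵀ * G).det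
      = B.det * (Dᵀ * G * D).det / (Dᵀ * B * D).det := by
  have hD : Function.Injective D.mulVec := by
    rw [← conjTranspose_eq_transpose_of_trivial] at hDGD
    exact hDGD.mulVec_injective_of_conjTranspose_mul_mul
  have hDBD : (Dᵀ * B * D).PosDef := by
    simpa only [conjTranspose_eq_transpose_of_trivial] using hB.conjTranspose_mul_mul_same hD
  change (blockBFGSUpdate B G D).det = _
  rw [det_blockBFGSUpdate B G D hB.det_pos.ne'.isUnit hDBD.det_pos.ne'.isUnit
    hDGD.det_pos.ne'.isUnit, det_mul, det_nonsing_inv, Ring.inverse_eq_inv', mul_div_assoc,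
    inv_mul_eq_div]

theorem stmt_1 {n q : ℕ} (B G : Matrix (Fin n) (Fin n) ℝ)
    (D : Matrix (Fin n) (Fin q) ℝ)
    (hB : B.PosDef) (hG : G.IsSymm)
    (hDGD : (Dᵀ * G * D).PosDef) :
    (B - B * D * (Dᵀ * B * D)⁻¹ * Dᵀ * B + G * D * (Dᵀ * G * D)⁻¹ * Dᵀ * G).det
      = B.det * (Dᵀ * G * D).det / (Dᵀ * B * D).det :=
  stmt_1_general B G D hB hDGD
end

section
/- Let $B \in \mathbb{R}^{n\times n}$ be symmetric positive definite, $D \in \mathbb{R}^{n\times q}$ with orthonormal columns ($D^TD = I_q$). Define $\tilde{B} = B - BD(D^TBD)^{-1}D^TB + DD^T$ and the projections $P = B^{1/2}D(D^TBD)^{-1}D^TB^{1/2}$, $P_B = BD(D^TB^2D)^{-1}D^TB$. Then $\|B - I\|_F^2 - \|\tilde{B} - I\|_F^2 = \|P_B - B^{1/2}PB^{1/2}\|_F^2 + 2\operatorname{Tr}(B(B^{1/2}PB^{1/2}) - (B^{1/2}PB^{1/2})^2)$. In particular $\|\tilde{B} - I\|_F \leq \|B - I\|_F$. -/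
/-!
Write `B = R * R`, `S = R * P * R` and `Q = D * Dᵀ`, so that `B̃ = B - S + Q`. Since `Q` is the
orthogonal projection onto `Col D` and `S * Q = B * Q`, expanding both squared Frobenius norms
leaves `2 tr (B S) - tr (S²) - 2 tr S + q`. As `P_B * S = S` and `tr P_B = q`, the same quantity
is `‖P_B - S‖² + 2 tr (B S - S²)`, and `tr (B S - S²) = ‖P B (1 - P)‖² ≥ 0` because `P` is an
orthogonal projection.
-/

open Matrix

namespace Matrix

variable {n q : Type*} [Fintype n] [Fintype q]

lemma trace_transpose_mul_self_nonneg (M : Matrix q n ℝ) : 0 ≤ trace (Mᵀ * M) := by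
  simpa using (posSemidef_conjTranspose_mul_self M).trace_nonneg

lemma mulVec_injective_of_transpose_mul_self [DecidableEq q] {D : Matrix n q ℝ}
    (hD : Dᵀ * D = 1) : Function.Injective D.mulVec :=
  Function.LeftInverse.injective (g := Dᵀ.mulVec) fun x => by rw [mulVec_mulVec, hD, one_mulVec]

lemma mulVec_injective_mul [DecidableEq n] {A : Matrix n n ℝ} (hA : IsUnit A) {D : Matrix n q ℝ}
    (hD : Function.Injective D.mulVec) : Function.Injective (A * D).mulVec := by
  have : (A * D).mulVec = A.mulVec ∘ D.mulVec := funext fun x => (mulVec_mulVec x A D).symm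
  exact this ▸ (mulVec_injective_of_isUnit hA).comp hD

section colProj

variable [DecidableEq q]

lemma isUnit_det_transpose_mul_self {C : Matrix n q ℝ} (hC : Function.Injective C.mulVec) :
    IsUnit (Cᵀ * C).det :=
  (isUnit_iff_isUnit_det _).mp (by simpa using (PosDef.conjTranspose_mul_self C hC).isUnit)

/-- The orthogonal projection onto the column space of `C`, when `C` has full column rank. -/
noncomputable def colProj (C : Matrix n q ℝ) : Matrix n n ℝ := C * (Cᵀ * C)⁻¹ * Cᵀ

lemma colProj_transpose (C : Matrix n q ℝ) : (colProj C)ᵀ = colProj C := by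
  simp [colProj, transpose_nonsing_inv, Matrix.mul_assoc]

lemma colProj_mul_cancel {C : Matrix n q ℝ} (hC : Function.Injective C.mulVec) :
    colProj C * C = C := by
  rw [colProj, Matrix.mul_assoc _ Cᵀ, Matrix.mul_assoc,
    nonsing_inv_mul _ (isUnit_det_transpose_mul_self hC), Matrix.mul_one]

lemma colProj_mul_cancel_left {m : Type*} {C : Matrix n q ℝ} (hC : Function.Injective C.mulVec)
    (X : Matrix q m ℝ) : colProj C * (C * X) = C * X := by
  rw [← Matrix.mul_assoc, colProj_mul_cancel hC]

lemma colProj_mul_colProj {C : Matrix n q ℝ} (hC : Function.Injective C.mulVec) :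
    colProj C * colProj C = colProj C :=
  calc colProj C * colProj C = colProj C * C * ((Cᵀ * C)⁻¹ * Cᵀ) := by
        simp only [colProj, Matrix.mul_assoc]
    _ = colProj C := by rw [colProj_mul_cancel hC, colProj, Matrix.mul_assoc]

lemma trace_colProj {C : Matrix n q ℝ} (hC : Function.Injective C.mulVec) :
    trace (colProj C) = Fintype.card q := by
  rw [colProj, trace_mul_comm, ← Matrix.mul_assoc,
    mul_nonsing_inv _ (isUnit_det_transpose_mul_self hC), trace_one]

lemma colProj_of_transpose_mul_self {D : Matrix n q ℝ} (hD : Dᵀ * D = 1) :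
    colProj D = D * Dᵀ := by
  rw [colProj, hD, inv_one, Matrix.mul_one]

end colProj

lemma trace_sq_sub_trace_sq_update [DecidableEq n] {B S Q : Matrix n n ℝ} (hB : Bᵀ = B)
    (hS : Sᵀ = S) (hQ : Qᵀ = Q) (hQQ : Q * Q = Q) (hSQ : S * Q = B * Q) :
    trace ((B - 1)ᵀ * (B - 1)) - trace ((B - S + Q - 1)ᵀ * (B - S + Q - 1))
      = 2 * trace (B * S) - trace (S * S) - 2 * trace S + trace Q := by
  have hQS : trace (Q * S) = trace (Q * B) := by rw [trace_mul_comm, hSQ, trace_mul_comm]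
  simp only [transpose_sub, transpose_add, transpose_one, hB, hS, hQ, sub_mul, mul_sub, add_mul,
    mul_add, mul_one, one_mul, trace_sub, trace_add, hQQ, hSQ, hQS, trace_mul_comm Q B,
    trace_mul_comm S B]
  ring

lemma trace_sq_proj_sub {E S : Matrix n n ℝ} (hE : Eᵀ = E) (hS : Sᵀ = S) (hEE : E * E = E)
    (hES : E * S = S) :
    trace ((E - S)ᵀ * (E - S)) = trace E - 2 * trace S + trace (S * S) := by
  simp only [transpose_sub, hE, hS, sub_mul, mul_sub, trace_sub, hEE, hES, trace_mul_comm S E]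
  ring

lemma trace_sq_mul_conj_sub_sq_nonneg [DecidableEq n] {R P : Matrix n n ℝ} (hR : Rᵀ = R)
    (hP : Pᵀ = P) (hPP : P * P = P) :
    0 ≤ trace (R * R * (R * P * R) - R * P * R * (R * P * R)) := by
  have hP' : (1 - P) * (1 - P) = 1 - P := by
    simp only [sub_mul, mul_sub, Matrix.one_mul, Matrix.mul_one, hPP, sub_self, sub_zero]
  set Z := P * (R * R) * (1 - P)
  calc 0 ≤ trace (Zᵀ * Z) := trace_transpose_mul_self_nonneg Z
    _ = trace ((1 - P) * (R * R * (P * P * (R * R))) * (1 - P)) := by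
      simp only [Z, transpose_mul, transpose_sub, transpose_one, hR, hP, Matrix.mul_assoc]
    _ = trace ((1 - P) * (1 - P) * (R * R * (P * P * (R * R)))) := by
      rw [trace_mul_comm, Matrix.mul_assoc (1 - P)]
    _ = trace (R * ((1 - P) * R * R * P * R)) := by
      rw [hP', hPP, trace_mul_comm R]
      simp only [Matrix.mul_assoc]
    _ = trace (R * R * (R * P * R) - R * P * R * (R * P * R)) := by
      congr 1
      noncomm_ring

lemma trace_sq_sub_trace_sq_blockBFGS [DecidableEq n] [DecidableEq q] {R : Matrix n n ℝ}
    (hR : IsUnit R) (hRt : Rᵀ = R) {D : Matrix n q ℝ} (hD : Dᵀ * D = 1) :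
    trace ((R * R - 1)ᵀ * (R * R - 1))
        - trace ((R * R - R * colProj (R * D) * R + D * Dᵀ - 1)ᵀ
          * (R * R - R * colProj (R * D) * R + D * Dᵀ - 1))
      = trace ((colProj (R * R * D) - R * colProj (R * D) * R)ᵀ
          * (colProj (R * R * D) - R * colProj (R * D) * R))
        + 2 * trace (R * R * (R * colProj (R * D) * R)
          - R * colProj (R * D) * R * (R * colProj (R * D) * R)) := by
  have hDinj := mulVec_injective_of_transpose_mul_self hD
  have hRD := mulVec_injective_mul hR hDinj
  have hBD := mulVec_injective_mul (hR.mul hR) hDinj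
  have hQ := colProj_of_transpose_mul_self hD
  have hSt : (R * colProj (R * D) * R)ᵀ = R * colProj (R * D) * R := by
    rw [transpose_mul, transpose_mul, hRt, colProj_transpose, Matrix.mul_assoc]
  have hSQ : R * colProj (R * D) * R * (D * Dᵀ) = R * R * (D * Dᵀ) := by
    simp only [Matrix.mul_assoc]
    rw [← Matrix.mul_assoc R D Dᵀ, colProj_mul_cancel_left hRD]
  have hES : colProj (R * R * D) * (R * colProj (R * D) * R) = R * colProj (R * D) * R := by
    rw [show R * colProj (R * D) * R = R * R * D * ((Dᵀ * R * (R * D))⁻¹ * (Dᵀ * R) * R) by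
      simp only [colProj, transpose_mul, hRt, Matrix.mul_assoc], colProj_mul_cancel_left hBD]
  rw [trace_sq_sub_trace_sq_update (by rw [transpose_mul, hRt]) hSt (hQ ▸ colProj_transpose D)
    (hQ ▸ colProj_mul_colProj hDinj) hSQ, trace_sq_proj_sub (colProj_transpose _) hSt
    (colProj_mul_colProj hBD) hES, trace_colProj hBD, ← hQ, trace_colProj hDinj, trace_sub]
  ring

section sqrt

variable [DecidableEq n]

lemma IsHermitian.eigenvectorUnitary_mul_diagonal_sqrt {B : Matrix n n ℝ} (hB : B.IsHermitian) :
    (hB.eigenvectorUnitary : Matrix n n ℝ) * diagonal (Real.sqrt ∘ hB.eigenvalues) *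
      (star hB.eigenvectorUnitary : Matrix n n ℝ) = cfc Real.sqrt B := by
  rw [hB.cfc_eq, IsHermitian.cfc, Unitary.conjStarAlgAut_apply]
  rfl

lemma PosSemidef.cfc_sqrt_mul_self {B : Matrix n n ℝ} (hB : B.PosSemidef) :
    cfc Real.sqrt B * cfc Real.sqrt B = B := by
  rw [← cfc_mul Real.sqrt Real.sqrt B]
  conv_rhs => rw [← cfc_id' ℝ B hB.1]
  exact cfc_congr fun x hx =>
    Real.mul_self_sqrt ((posSemidef_iff_isHermitian_and_spectrum_nonneg.1 hB).2 hx)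

lemma transpose_cfc_sqrt (B : Matrix n n ℝ) : (cfc Real.sqrt B)ᵀ = cfc Real.sqrt B :=
  (cfc_predicate Real.sqrt B : IsSelfAdjoint _)

end sqrt

end Matrix

theorem stmt_16 {n q : ℕ} (B : Matrix (Fin n) (Fin n) ℝ) (hB : B.PosDef)
    (D : Matrix (Fin n) (Fin q) ℝ) (hD : Dᵀ * D = 1)
    (R P PB Bt : Matrix (Fin n) (Fin n) ℝ)
    (hR : R = (hB.posSemidef.1.eigenvectorUnitary : Matrix (Fin n) (Fin n) ℝ) *
      diagonal (Real.sqrt ∘ hB.posSemidef.1.eigenvalues) *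
      (star hB.posSemidef.1.eigenvectorUnitary : Matrix (Fin n) (Fin n) ℝ))
    (hBt : Bt = B - B * D * (Dᵀ * B * D)⁻¹ * Dᵀ * B + D * Dᵀ)
    (hP : P = R * D * (Dᵀ * B * D)⁻¹ * Dᵀ * R)
    (hPB : PB = B * D * (Dᵀ * B * B * D)⁻¹ * Dᵀ * B) :
    (Matrix.trace ((B - 1)ᵀ * (B - 1)) - Matrix.trace ((Bt - 1)ᵀ * (Bt - 1))
        = Matrix.trace ((PB - R * P * R)ᵀ * (PB - R * P * R))
          + 2 * Matrix.trace (B * (R * P * R) - (R * P * R) * (R * P * R))) ∧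
      Real.sqrt (Matrix.trace ((Bt - 1)ᵀ * (Bt - 1)))
        ≤ Real.sqrt (Matrix.trace ((B - 1)ᵀ * (B - 1))) := by
  rw [hB.posSemidef.1.eigenvectorUnitary_mul_diagonal_sqrt] at hR
  have hRt : Rᵀ = R := hR ▸ transpose_cfc_sqrt B
  have hRR : R * R = B := hR ▸ hB.posSemidef.cfc_sqrt_mul_self
  have hRunit : IsUnit R := isUnit_of_mul_isUnit_left (hRR ▸ hB.isUnit)
  subst hRR hP hPB hBt
  have hP : R * D * (Dᵀ * (R * R) * D)⁻¹ * Dᵀ * R = colProj (R * D) := by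
    simp only [colProj, transpose_mul, hRt, Matrix.mul_assoc]
  have hPB :
      R * R * D * (Dᵀ * (R * R) * (R * R) * D)⁻¹ * Dᵀ * (R * R) = colProj (R * R * D) := by
    simp only [colProj, transpose_mul, hRt, Matrix.mul_assoc]
  have hS : R * R * D * (Dᵀ * (R * R) * D)⁻¹ * Dᵀ * (R * R) = R * colProj (R * D) * R := by
    simp only [← hP, Matrix.mul_assoc]
  rw [hP, hPB, hS]
  have hnonneg := trace_sq_mul_conj_sub_sq_nonneg hRt (colProj_transpose (R * D))
    (colProj_mul_colProj (mulVec_injective_mul hRunit (mulVec_injective_of_transpose_mul_self hD)))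
  have key := trace_sq_sub_trace_sq_blockBFGS hRunit hRt hD
  exact ⟨key, Real.sqrt_le_sqrt (by
    linarith [trace_transpose_mul_self_nonneg (colProj (R * R * D) - R * colProj (R * D) * R)])⟩
end

section
/- Let $B \in \mathbb{R}^{n\times n}$ be symmetric positive definite and let $v_1, \ldots, v_q$ be nonzero $B$-conjugate vectors with $D = [v_1 \cdots v_q]$. Then $\operatorname{Tr}((I_q - D^TB^2D(D^TBD)^{-1})^2) = \sum_{i=1}^q \left(1 - \frac{v_i^TB^2v_i}{v_i^TBv_i}\right)^2 + \sum_{i=1}^q\sum_{j\neq i} \frac{(v_i^TB^2v_j)^2}{(v_i^TBv_i)(v_j^TBv_j)}$. In particular, for each $i$, $\left(1 - \frac{v_i^TB^2v_i}{v_i^TBv_i}\right)^2 \leq \operatorname{Tr}((I_q - D^TB^2D(D^TBD)^{-1})^2)$. -/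
open Matrix

/-! Conjugacy makes `DᵀBD` the diagonal matrix of the `vᵢᵀBvᵢ`, so the `(i, j)` entry of
`I - DᵀB²D(DᵀBD)⁻¹` is `δᵢⱼ - vᵢᵀB²vⱼ / vⱼᵀBvⱼ`. In the trace of its square, the symmetry of
`DᵀB²D` turns each off-diagonal product of entries `(i, j)` and `(j, i)` into a nonnegative
square. -/

namespace Matrix

variable {ι κ K : Type*} [Fintype κ]

theorem transpose_mul_mul_apply [CommSemiring K] (D : Matrix κ ι K) (X : Matrix κ κ K) (i j : ι) :
    (Dᵀ * X * D) i j = Dᵀ i ⬝ᵥ X *ᵥ Dᵀ j := by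
  rw [dotProduct_mulVec]
  rfl

theorem IsSymm.transpose_mul_mul [CommSemiring K] {X : Matrix κ κ K} (hX : X.IsSymm)
    (D : Matrix κ ι K) : (Dᵀ * X * D).IsSymm := by
  rw [IsSymm, transpose_mul, transpose_mul, hX.eq, transpose_transpose, Matrix.mul_assoc]

variable [Fintype ι] [DecidableEq ι] [Field K]

theorem trace_one_sub_mul_inv_diagonal_sq {A : Matrix ι ι K} (hA : A.IsSymm) {d : ι → K}
    (hd : ∀ i, d i ≠ 0) :
    trace ((1 - A * (diagonal d)⁻¹) * (1 - A * (diagonal d)⁻¹))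
      = ∑ i, (1 - A i i / d i) ^ 2
        + ∑ i, ∑ j ∈ Finset.univ.erase i, A i j ^ 2 / (d i * d j) := by
  have hinv : (diagonal d)⁻¹ = diagonal fun i => (d i)⁻¹ := by
    rw [inv_eq_right_inv]
    simp [diagonal_mul_diagonal, hd]
  have hentry : ∀ i j, (1 - A * (diagonal d)⁻¹) i j = (1 : Matrix ι ι K) i j - A i j / d j := by
    intro i j
    simp [hinv, div_eq_mul_inv]
  simp only [trace, diag_apply, mul_apply, hentry, ← Finset.sum_add_distrib]
  refine Finset.sum_congr rfl fun i _ => ?_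
  rw [← Finset.add_sum_erase _ _ (Finset.mem_univ i), one_apply_eq, sq]
  congr 1
  refine Finset.sum_congr rfl fun j hj => ?_
  have hji : j ≠ i := Finset.ne_of_mem_erase hj
  rw [one_apply_ne hji.symm, one_apply_ne hji, hA.apply i j]
  ring

end Matrix

theorem stmt_17 {n q : ℕ} (B : Matrix (Fin n) (Fin n) ℝ) (hB : B.PosDef)
    (v : Fin q → Fin n → ℝ) (hv : ∀ i, v i ≠ 0)
    (hconj : ∀ i j, i ≠ j → v i ⬝ᵥ B.mulVec (v j) = 0)
    (D : Matrix (Fin n) (Fin q) ℝ) (hD : D = Matrix.of fun i j => v j i) :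
    Matrix.trace ((1 - Dᵀ * B * B * D * (Dᵀ * B * D)⁻¹)
          * (1 - Dᵀ * B * B * D * (Dᵀ * B * D)⁻¹))
        = ∑ i, (1 - (v i ⬝ᵥ (B * B).mulVec (v i)) / (v i ⬝ᵥ B.mulVec (v i))) ^ 2
          + ∑ i, ∑ j ∈ Finset.univ.erase i,
              (v i ⬝ᵥ (B * B).mulVec (v j)) ^ 2
                / ((v i ⬝ᵥ B.mulVec (v i)) * (v j ⬝ᵥ B.mulVec (v j))) ∧
      ∀ i, (1 - (v i ⬝ᵥ (B * B).mulVec (v i)) / (v i ⬝ᵥ B.mulVec (v i))) ^ 2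
        ≤ Matrix.trace ((1 - Dᵀ * B * B * D * (Dᵀ * B * D)⁻¹)
            * (1 - Dᵀ * B * B * D * (Dᵀ * B * D)⁻¹)) := by
  have hd : ∀ i, 0 < v i ⬝ᵥ B *ᵥ v i := fun i => hB.dotProduct_mulVec_pos (hv i)
  have hgram : ∀ X i j, (Dᵀ * X * D) i j = v i ⬝ᵥ X *ᵥ v j := by
    subst hD
    exact transpose_mul_mul_apply _
  have hdiag : Dᵀ * B * D = diagonal fun i => v i ⬝ᵥ B *ᵥ v i := by
    ext i j
    rcases eq_or_ne i j with rfl | hij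
    · rw [hgram, diagonal_apply_eq]
    · rw [hgram, diagonal_apply_ne _ hij, hconj i j hij]
  have hBB : (B * B).IsSymm := by
    rw [IsSymm, transpose_mul, (isHermitian_iff_isSymm.mp hB.1).eq]
  have htrace := trace_one_sub_mul_inv_diagonal_sq (hBB.transpose_mul_mul D) fun i => (hd i).ne'
  simp only [hgram] at htrace
  rw [hdiag, Matrix.mul_assoc Dᵀ B B]
  refine ⟨htrace, fun i => ?_⟩
  rw [htrace]
  have hoff : 0 ≤ ∑ i, ∑ j ∈ Finset.univ.erase i,
      (v i ⬝ᵥ (B * B) *ᵥ v j) ^ 2 / ((v i ⬝ᵥ B *ᵥ v i) * (v j ⬝ᵥ B *ᵥ v j)) :=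
    Finset.sum_nonneg fun i _ => Finset.sum_nonneg fun j _ =>
      div_nonneg (sq_nonneg _) (mul_pos (hd i) (hd j)).le
  exact le_add_of_le_of_nonneg
    (Finset.single_le_sum (f := fun k => (1 - (v k ⬝ᵥ (B * B) *ᵥ v k) / (v k ⬝ᵥ B *ᵥ v k)) ^ 2)
      (fun k _ => sq_nonneg _) (Finset.mem_univ i)) hoff
end
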